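/- Rényi divergence bound for the discrete Gaussian mechanism: let σ > 0, and for μ ∈ ℤ let N_ℤ(μ, σ²) denote the discrete Gaussian distribution on ℤ with Pr[X = x] = e^{−(x−μ)²/(2σ²)} / Σ_{y ∈ ℤ} e^{−(y−μ)²/(2σ²)}. Then for every α > 1 and all μ₁, μ₂ ∈ ℤ, the Rényi divergence satisfies D_α(N_ℤ(μ₁, σ²) ‖ N_ℤ(μ₂, σ²)) ≤ α·(μ₁ − μ₂)²/(2σ²); in particular, for an integer-valued query f of sensitivity 1 (|f(D) − f(D')| ≤ 1 on neighboring datasets), the mechanism A(D) = f(D) + N_ℤ(0, σ²) satisfies (α, α/(2σ²))-RDP. -/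

import Mathlib

open MeasureTheory

open Real in
/-- Summability of a shifted Gaussian over `ℤ`. -/
lemma gauss_summable {c : ℝ} (hc : 0 < c) (t : ℝ) :
    Summable fun n : ℤ ↦ rexp (-c * ((n : ℝ) - t) ^ 2) := by
  have h := summable_pow_mul_jacobiTheta₂_term_bound (c * |t| / π) (div_pos hc pi_pos) 0
  refine h.of_nonneg_of_le (fun n => (exp_pos _).le) (fun n => ?_)
  simp only [pow_zero, one_mul]
  rw [exp_le_exp]
  have h1 : -π * (c / π * (n:ℝ) ^ 2 - 2 * (c * |t| / π) * |(n:ℝ)|)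
      = -c * (n:ℝ)^2 + 2 * c * |t| * |(n:ℝ)| := by
    field_simp
    ring
  rw [Int.cast_abs, h1]
  nlinarith [abs_mul (n:ℝ) t, mul_le_mul_of_nonneg_left (le_abs_self ((n:ℝ)*t)) hc.le,
    mul_nonneg hc.le (sq_nonneg t), abs_mul (n:ℝ) t ▸ (le_abs_self ((n:ℝ)*t))]

open Real in
set_option maxHeartbeats 1000000 in
/-- The sum of a Gaussian over `ℤ` is maximized when it is centred at an integer
(a consequence of Poisson summation). -/
lemma gauss_shift_le {c : ℝ} (hc : 0 < c) (t : ℝ) :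
    (∑' n : ℤ, rexp (-c * ((n : ℝ) - t) ^ 2)) ≤ ∑' n : ℤ, rexp (-c * (n : ℝ) ^ 2) := by
  have hπ : (π : ℝ) ≠ 0 := pi_ne_zero
  set ar : ℝ := c / π with har_def
  have har : 0 < ar := div_pos hc pi_pos
  set b : ℝ := c * t / π with hb_def
  have key := Complex.tsum_exp_neg_quadratic (a := (ar : ℂ)) (by simpa using har) ((b : ℝ) : ℂ)
  set S : ℝ := ∑' n : ℤ, rexp (-c * ((n : ℝ) - t) ^ 2) with hS_def
  set T : ℝ := ∑' n : ℤ, rexp (-π / ar * (n : ℝ) ^ 2) with hT_def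
  have hA : ∀ n : ℤ, Complex.exp (-(π:ℂ) * (ar:ℂ) * (n:ℂ) ^ 2 + 2 * (π:ℂ) * (b:ℂ) * (n:ℂ))
      = Complex.exp ((c * t ^ 2 : ℝ) : ℂ) * ((rexp (-c * ((n : ℝ) - t) ^ 2) : ℝ) : ℂ) := by
    intro n
    rw [Complex.ofReal_exp, ← Complex.exp_add]
    congr 1
    have hπc : ((π : ℝ) : ℂ) ≠ 0 := Complex.ofReal_ne_zero.mpr hπ
    rw [har_def, hb_def]
    push_cast
    field_simp
    ring
  have h2 : (∑' n : ℤ, Complex.exp (-(π:ℂ) * (ar:ℂ) * (n:ℂ) ^ 2 + 2 * (π:ℂ) * (b:ℂ) * (n:ℂ)))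
      = Complex.exp ((c * t ^ 2 : ℝ) : ℂ) * ((S : ℝ) : ℂ) := by
    rw [hS_def, Complex.ofReal_tsum, ← tsum_mul_left]
    exact tsum_congr hA
  have h3 : ((S : ℝ) : ℂ) = Complex.exp (-(c * t ^ 2 : ℝ) : ℂ) *
      (1 / (ar : ℂ) ^ (1 / 2 : ℂ) * ∑' n : ℤ, Complex.exp (-(π:ℂ) / (ar:ℂ) * ((n:ℂ) + Complex.I * (b:ℂ)) ^ 2)) := by
    rw [← key, h2, ← mul_assoc, ← Complex.exp_add]
    norm_num
  have hnorm : ∀ n : ℤ, ‖Complex.exp (-(π:ℂ) / (ar:ℂ) * ((n:ℂ) + Complex.I * (b:ℂ)) ^ 2)‖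
      = rexp (c * t ^ 2) * rexp (-π / ar * (n : ℝ) ^ 2) := by
    intro n
    have harg : (-(π:ℂ) / (ar:ℂ) * ((n:ℂ) + Complex.I * (b:ℂ)) ^ 2)
        = ((-π / ar * ((n:ℝ) ^ 2 - b ^ 2) : ℝ) : ℂ) + ((-π / ar * (2 * n * b) : ℝ) : ℂ) * Complex.I := by
      push_cast
      ring_nf
      rw [Complex.I_sq]
      ring
    rw [Complex.norm_exp, harg]
    simp only [Complex.add_re, Complex.ofReal_re, Complex.mul_I_re, Complex.ofReal_im]
    rw [← Real.exp_add]
    congr 1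
    have hb2 : π / ar * b ^ 2 = c * t ^ 2 := by
      rw [har_def, hb_def]; field_simp
    linear_combination hb2
  have hsumnorm : Summable fun n : ℤ ↦
      ‖Complex.exp (-(π:ℂ) / (ar:ℂ) * ((n:ℂ) + Complex.I * (b:ℂ)) ^ 2)‖ := by
    simp only [hnorm]
    apply Summable.mul_left
    simpa [neg_div, neg_mul] using gauss_summable (div_pos pi_pos har) 0
  have hBnorm : ‖∑' n : ℤ, Complex.exp (-(π:ℂ) / (ar:ℂ) * ((n:ℂ) + Complex.I * (b:ℂ)) ^ 2)‖
      ≤ rexp (c * t ^ 2) * T := by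
    refine (norm_tsum_le_tsum_norm hsumnorm).trans_eq ?_
    rw [hT_def, ← tsum_mul_left]
    exact tsum_congr hnorm
  have hcpow : ‖1 / (ar : ℂ) ^ (1 / 2 : ℂ)‖ = 1 / ar ^ (1 / 2 : ℝ) := by
    have : ((ar ^ (1 / 2 : ℝ) : ℝ) : ℂ) = (ar : ℂ) ^ (1 / 2 : ℂ) := by
      rw [Complex.ofReal_cpow har.le]
      norm_num
    rw [← this]
    rw [norm_div, Complex.norm_real, norm_one, Real.norm_eq_abs,
      abs_of_nonneg (Real.rpow_nonneg har.le _)]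
  have hS_nonneg : 0 ≤ S := tsum_nonneg fun n => (exp_pos _).le
  have hSle : S ≤ 1 / ar ^ (1 / 2 : ℝ) * T := by
    have h4 : S = ‖((S : ℝ) : ℂ)‖ := by
      rw [Complex.norm_real, Real.norm_eq_abs, abs_of_nonneg hS_nonneg]
    rw [h4, h3, norm_mul, norm_mul, Complex.norm_exp]
    simp only [Complex.neg_re, Complex.ofReal_re, hcpow]
    calc rexp (-(c * t ^ 2)) * (1 / ar ^ (1 / 2 : ℝ) * ‖_‖)
        ≤ rexp (-(c * t ^ 2)) * (1 / ar ^ (1 / 2 : ℝ) * (rexp (c * t ^ 2) * T)) := by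
          gcongr
      _ = 1 / ar ^ (1 / 2 : ℝ) * T := by
          rw [Real.exp_neg]
          field_simp
  have hfinal : (∑' n : ℤ, rexp (-c * (n : ℝ) ^ 2)) = 1 / ar ^ (1 / 2 : ℝ) * T := by
    have h5 : (∑' n : ℤ, rexp (-π * ar * (n : ℝ) ^ 2)) = 1 / ar ^ (1 / 2 : ℝ) * T :=
      Real.tsum_exp_neg_mul_int_sq har
    rw [← h5]
    apply tsum_congr
    intro n
    congr 1
    rw [har_def]
    field_simp
  rw [hfinal]
  exact hSle

/-- The discrete Gaussian distribution `N_ℤ(μ, σ²)` on `ℤ`, with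
`Pr[X = x] = e^{−(x−μ)²/(2σ²)} / Σ_{y∈ℤ} e^{−(y−μ)²/(2σ²)}`. -/
noncomputable def discreteGaussian (σ2 : ℝ) (μ : ℤ) : Measure ℤ :=
  Measure.sum fun x : ℤ =>
    ENNReal.ofReal
      (Real.exp (-((x : ℝ) - (μ : ℝ)) ^ 2 / (2 * σ2)) /
        ∑' y : ℤ, Real.exp (-((y : ℝ) - (μ : ℝ)) ^ 2 / (2 * σ2))) • Measure.dirac x

/-- The Rényi divergence of order `α` between two probability measures on `ℤ`:
`D_α(P ‖ Q) = (1/(α−1)) · ln E_{x∼Q}[((dP/dQ)(x))^α]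
            = (1/(α−1)) · ln Σ_x P{x}^α · Q{x}^{1−α}`. -/
noncomputable def renyiDivInt (α : ℝ) (P Q : Measure ℤ) : ℝ :=
  (α - 1)⁻¹ * Real.log (∑' x : ℤ, (P {x}).toReal ^ α * (Q {x}).toReal ^ (1 - α))

open Real in
/-- The value of the discrete Gaussian on a singleton. -/
lemma dg_singleton (σ2 : ℝ) (μ x : ℤ) :
    discreteGaussian σ2 μ {x} = ENNReal.ofReal
      (rexp (-((x : ℝ) - μ) ^ 2 / (2 * σ2)) / ∑' y : ℤ, rexp (-(y : ℝ) ^ 2 / (2 * σ2))) := by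
  have hZ : (∑' y : ℤ, rexp (-((y : ℝ) - μ) ^ 2 / (2 * σ2)))
      = ∑' y : ℤ, rexp (-(y : ℝ) ^ 2 / (2 * σ2)) := by
    rw [← (Equiv.addRight μ).tsum_eq (fun y : ℤ ↦ rexp (-((y : ℝ) - μ) ^ 2 / (2 * σ2)))]
    apply tsum_congr
    intro z
    congr 2
    push_cast [Equiv.coe_addRight]
    ring
  rw [discreteGaussian, Measure.sum_apply _ (measurableSet_singleton x)]
  simp only [Measure.smul_apply, smul_eq_mul]
  rw [tsum_eq_single x]
  · rw [Measure.dirac_apply' _ (measurableSet_singleton x)]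
    simp [hZ]
  · intro y hy
    rw [Measure.dirac_apply' _ (measurableSet_singleton x)]
    simp [Set.indicator_of_notMem, hy]

open Real in
/-- Part (i): the Rényi divergence bound between two discrete Gaussians. -/
lemma renyi_bound_gaussians (σ2 : ℝ) (hσ2 : 0 < σ2) (α : ℝ) (hα : 1 < α) (μ₁ μ₂ : ℤ) :
    renyiDivInt α (discreteGaussian σ2 μ₁) (discreteGaussian σ2 μ₂) ≤
      α * ((μ₁ : ℝ) - (μ₂ : ℝ)) ^ 2 / (2 * σ2) := by
  have h2σ : (0:ℝ) < 2 * σ2 := by positivity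
  have hsumm : ∀ t : ℝ, Summable fun n : ℤ ↦ rexp (-((n : ℝ) - t) ^ 2 / (2 * σ2)) := by
    intro t
    exact (gauss_summable (c := (2*σ2)⁻¹) (by positivity) t).congr fun n => by
      rw [show -(2*σ2)⁻¹ * ((n:ℝ) - t)^2 = -((n:ℝ) - t)^2 / (2*σ2) by ring]
  have hZsumm : Summable fun n : ℤ ↦ rexp (-(n : ℝ) ^ 2 / (2 * σ2)) :=
    (hsumm 0).congr fun n => by norm_num
  set Z : ℝ := ∑' y : ℤ, rexp (-(y : ℝ) ^ 2 / (2 * σ2)) with hZ_def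
  have hZpos : 0 < Z := Summable.tsum_pos hZsumm (fun n => (exp_pos _).le) 0 (exp_pos _)
  set L : ℝ := Real.log Z with hL_def
  set m : ℝ := α * μ₁ + (1 - α) * μ₂ with hm_def
  set G : ℝ := α * (α - 1) * ((μ₁:ℝ) - μ₂)^2 / (2*σ2) with hG_def
  have htoReal : ∀ (μ x : ℤ), ((discreteGaussian σ2 μ) {x}).toReal
      = rexp (-((x : ℝ) - μ) ^ 2 / (2 * σ2)) / Z := by
    intro μ x
    rw [dg_singleton σ2 μ x, ENNReal.toReal_ofReal (by positivity)]
  have hterm : ∀ x : ℤ, ((discreteGaussian σ2 μ₁) {x}).toReal ^ α *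
      ((discreteGaussian σ2 μ₂) {x}).toReal ^ (1 - α)
      = rexp (-((x : ℝ) - m) ^ 2 / (2 * σ2)) * (rexp G / Z) := by
    intro x
    rw [htoReal, htoReal]
    have hp : ∀ μ : ℤ, rexp (-((x : ℝ) - μ) ^ 2 / (2 * σ2)) / Z
        = rexp (-((x : ℝ) - μ) ^ 2 / (2 * σ2) - L) := by
      intro μ
      rw [Real.exp_sub, hL_def, Real.exp_log hZpos]
    rw [hp, hp, ← Real.exp_mul, ← Real.exp_mul, ← Real.exp_add]
    have harg : (-((x : ℝ) - μ₁) ^ 2 / (2 * σ2) - L) * α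
          + (-((x : ℝ) - μ₂) ^ 2 / (2 * σ2) - L) * (1 - α)
        = (-((x : ℝ) - m) ^ 2 / (2 * σ2) + G) + (-L) := by
      rw [hm_def, hG_def]
      field_simp
      ring
    rw [harg, Real.exp_add, Real.exp_add, Real.exp_neg, hL_def, Real.exp_log hZpos]
    ring
  have hsum_eq : (∑' x : ℤ, ((discreteGaussian σ2 μ₁) {x}).toReal ^ α *
      ((discreteGaussian σ2 μ₂) {x}).toReal ^ (1 - α))
      = (∑' x : ℤ, rexp (-((x : ℝ) - m) ^ 2 / (2 * σ2))) * (rexp G / Z) := by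
    rw [← tsum_mul_right]
    exact tsum_congr hterm
  have hshift : (∑' x : ℤ, rexp (-((x : ℝ) - m) ^ 2 / (2 * σ2))) ≤ Z := by
    have h1 := gauss_shift_le (c := (2*σ2)⁻¹) (by positivity) m
    calc (∑' x : ℤ, rexp (-((x : ℝ) - m) ^ 2 / (2 * σ2)))
        = ∑' x : ℤ, rexp (-(2*σ2)⁻¹ * ((x : ℝ) - m) ^ 2) :=
          tsum_congr fun n => by
            rw [show -(2*σ2)⁻¹ * ((n:ℝ) - m)^2 = -((n:ℝ) - m)^2 / (2*σ2) by ring]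
      _ ≤ ∑' x : ℤ, rexp (-(2*σ2)⁻¹ * (x : ℝ) ^ 2) := h1
      _ = Z := tsum_congr fun n => by
            rw [show -(2*σ2)⁻¹ * (n:ℝ)^2 = -(n:ℝ)^2 / (2*σ2) by ring]
  have hSpos : 0 < ∑' x : ℤ, rexp (-((x : ℝ) - m) ^ 2 / (2 * σ2)) :=
    Summable.tsum_pos (hsumm m) (fun n => (exp_pos _).le) 0 (exp_pos _)
  have hle : (∑' x : ℤ, ((discreteGaussian σ2 μ₁) {x}).toReal ^ α *
      ((discreteGaussian σ2 μ₂) {x}).toReal ^ (1 - α)) ≤ rexp G := by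
    rw [hsum_eq]
    calc (∑' x : ℤ, rexp (-((x : ℝ) - m) ^ 2 / (2 * σ2))) * (rexp G / Z)
        ≤ Z * (rexp G / Z) := by gcongr
      _ = rexp G := by field_simp
  have hpos : 0 < ∑' x : ℤ, ((discreteGaussian σ2 μ₁) {x}).toReal ^ α *
      ((discreteGaussian σ2 μ₂) {x}).toReal ^ (1 - α) := by
    rw [hsum_eq]
    positivity
  rw [renyiDivInt]
  have hlog : Real.log (∑' x : ℤ, ((discreteGaussian σ2 μ₁) {x}).toReal ^ α *
      ((discreteGaussian σ2 μ₂) {x}).toReal ^ (1 - α)) ≤ G :=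
    (Real.log_le_log hpos hle).trans_eq (Real.log_exp G)
  have hα1 : (0:ℝ) ≤ (α - 1)⁻¹ := inv_nonneg.mpr (by linarith)
  have hαne : α - 1 ≠ 0 := by intro h; nlinarith [h]
  calc (α - 1)⁻¹ * Real.log (∑' x : ℤ, ((discreteGaussian σ2 μ₁) {x}).toReal ^ α *
      ((discreteGaussian σ2 μ₂) {x}).toReal ^ (1 - α))
      ≤ (α - 1)⁻¹ * G := mul_le_mul_of_nonneg_left hlog hα1
    _ = α * ((μ₁ : ℝ) - μ₂) ^ 2 / (2 * σ2) := by
        rw [hG_def]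
        field_simp

open Real in
/-- The shifted discrete Gaussian is a discrete Gaussian. -/
lemma dg_map (σ2 : ℝ) (k x : ℤ) :
    ((discreteGaussian σ2 0).map fun z => k + z) {x} = discreteGaussian σ2 k {x} := by
  rw [Measure.map_apply (measurable_of_countable _) (measurableSet_singleton x)]
  have hpre : (fun z : ℤ => k + z) ⁻¹' {x} = {x - k} := by
    ext z
    simp only [Set.mem_preimage, Set.mem_singleton_iff]
    omega
  rw [hpre, dg_singleton σ2 0 (x - k), dg_singleton σ2 k x]
  congr 3
  push_cast
  ring

/-- Rényi divergence bound for the discrete Gaussian mechanism: for `σ > 0` and `α > 1`,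
(i) for all means `μ₁, μ₂ ∈ ℤ`,
`D_α(N_ℤ(μ₁,σ²) ‖ N_ℤ(μ₂,σ²)) ≤ α·(μ₁ − μ₂)²/(2σ²)`; in particular (ii) for an
integer-valued query `f` of sensitivity 1 on neighboring datasets, the mechanism
`A(D) = f(D) + N_ℤ(0,σ²)` satisfies `(α, α/(2σ²))`-RDP. -/
theorem discrete_gaussian_renyi_bound (σ2 : ℝ) (hσ2 : 0 < σ2)
    {D : Type*} (N : D → D → Prop) (f : D → ℤ)
    (hf : ∀ d d', N d d' → |f d - f d'| ≤ 1)
    (α : ℝ) (hα : 1 < α) :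
    (∀ μ₁ μ₂ : ℤ,
      renyiDivInt α (discreteGaussian σ2 μ₁) (discreteGaussian σ2 μ₂) ≤
        α * ((μ₁ : ℝ) - (μ₂ : ℝ)) ^ 2 / (2 * σ2)) ∧
    (∀ d d', N d d' →
      renyiDivInt α
          ((discreteGaussian σ2 0).map fun z => f d + z)
          ((discreteGaussian σ2 0).map fun z => f d' + z) ≤
        α / (2 * σ2)) := by
  refine ⟨renyi_bound_gaussians σ2 hσ2 α hα, fun d d' hN => ?_⟩
  have heq : renyiDivInt α
      ((discreteGaussian σ2 0).map fun z => f d + z)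
      ((discreteGaussian σ2 0).map fun z => f d' + z)
      = renyiDivInt α (discreteGaussian σ2 (f d)) (discreteGaussian σ2 (f d')) := by
    rw [renyiDivInt, renyiDivInt]
    congr 2
    apply tsum_congr
    intro x
    rw [dg_map, dg_map]
  rw [heq]
  refine (renyi_bound_gaussians σ2 hσ2 α hα (f d) (f d')).trans ?_
  have hsq : ((f d : ℝ) - (f d' : ℝ)) ^ 2 ≤ 1 := by
    have h1 : |(f d : ℝ) - (f d' : ℝ)| ≤ 1 := by
      have := hf d d' hN
      calc |(f d : ℝ) - (f d' : ℝ)| = |((f d - f d' : ℤ) : ℝ)| := by push_cast; ring_nf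
        _ = ((|f d - f d'| : ℤ) : ℝ) := by rw [Int.cast_abs]
        _ ≤ 1 := by exact_mod_cast this
    calc ((f d : ℝ) - (f d' : ℝ)) ^ 2 = |(f d : ℝ) - (f d' : ℝ)| ^ 2 := (sq_abs _).symm
      _ ≤ 1 ^ 2 := by gcongr
      _ = 1 := one_pow 2
  have h2σ : (0:ℝ) < 2 * σ2 := by positivity
  calc α * ((f d : ℝ) - (f d' : ℝ)) ^ 2 / (2 * σ2) ≤ α * 1 / (2 * σ2) := by
        gcongr
    _ = α / (2 * σ2) := by rw [mul_one]
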